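/- For the complete graph K_n (n ≥ 1), the boxicity of its Mycielski graph M_2(K_n) equals ⌈n/2⌉ if n is odd and ⌈n/2⌉ + 1 = n/2 + 1 if n is even. -/

import Mathlib

open SimpleGraph

/-- `G` has a representation by axis-parallel boxes in `ℝ^k`: distinct vertices are
adjacent iff their boxes intersect. -/
def HasBoxRep {V : Type*} (G : SimpleGraph V) (k : ℕ) : Prop :=
  ∃ lo hi : V → Fin k → ℝ,
    ∀ u v : V, u ≠ v →
      (G.Adj u v ↔ ∀ i, max (lo u i) (lo v i) ≤ min (hi u i) (hi v i))

/-- The boxicity of a graph: the least `k` such that `G` has a box representation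
in `ℝ^k` (0 for complete graphs). -/
noncomputable def boxicity {V : Type*} (G : SimpleGraph V) : ℕ :=
  sInf {k | HasBoxRep G k}

/-- An interval graph: an intersection graph of closed intervals on the real line. -/
def IsIntervalGraph {V : Type*} (G : SimpleGraph V) : Prop := HasBoxRep G 1

/-- A cointerval graph: the complement is an interval graph. -/
def Cointerval {V : Type*} (G : SimpleGraph V) : Prop := IsIntervalGraph Gᶜ

/-- The generalized Mycielski graph `M_r(G)`: vertex `none` is the apex `z`,
`some (v, i)` is the copy `v_{i+1}` of `v` in level `i`.  Level `0` induces a copy of `G`,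
consecutive levels are joined by `u_{i-1}v_i, v_{i-1}u_i` for `uv ∈ E(G)`, and `z`
is joined to all vertices of the top level `r-1`. -/
def genMycielski {V : Type*} (G : SimpleGraph V) (r : ℕ) :
    SimpleGraph (Option (V × Fin r)) :=
  SimpleGraph.fromRel (fun a b =>
    match a, b with
    | some (u, i), some (v, j) =>
        (i = j ∧ (i : ℕ) = 0 ∧ G.Adj u v) ∨ ((j : ℕ) = (i : ℕ) + 1 ∧ G.Adj u v)
    | some (_, i), none => (i : ℕ) = r - 1
    | none, _ => False)

/-- A focal (universal) vertex: adjacent to all other vertices. -/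
def IsFocal {V : Type*} (G : SimpleGraph V) (v : V) : Prop :=
  ∀ w, w ≠ v → G.Adj v w

/-- `G` with `n` additional universal vertices, i.e. the `n`-th focalization `G^{fⁿ}`. -/
def addUniversal {V : Type*} (G : SimpleGraph V) (n : ℕ) :
    SimpleGraph (V ⊕ Fin n) :=
  SimpleGraph.fromRel (fun a b =>
    match a, b with
    | Sum.inl u, Sum.inl v => G.Adj u v
    | _, _ => True)

/-- The edge clique cover number: the minimum number of cliques covering all edges. -/
noncomputable def edgeCliqueCoverNumber {V : Type*} (G : SimpleGraph V) : ℕ :=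
  sInf {k | ∃ f : Fin k → Set V, (∀ i, G.IsClique (f i)) ∧
    ∀ u v, G.Adj u v → ∃ i, u ∈ f i ∧ v ∈ f i}

/-- Disjoint union of two graphs. -/
def disjUnionGraph {α β : Type*} (G : SimpleGraph α) (H : SimpleGraph β) :
    SimpleGraph (α ⊕ β) :=
  SimpleGraph.fromRel (fun a b =>
    match a, b with
    | Sum.inl u, Sum.inl v => G.Adj u v
    | Sum.inr u, Sum.inr v => H.Adj u v
    | _, _ => False)

/-- The complete multipartite graph with parts `V i`. -/
def completeMultipartite {ι : Type*} (V : ι → Type*) : SimpleGraph (Σ i, V i) where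
  Adj a b := a.1 ≠ b.1
  symm := ⟨fun _ _ h => Ne.symm h⟩
  loopless := ⟨fun _ h => h rfl⟩

/-!
Write `u_i, w_i` for the two copies of the vertex `i` of `Kₙ` and `z` for the apex. In a box
representation in `ℝᵏ`, each nonadjacent pair `u_i, w_i` is separated along some axis, with `u_i`
lying either left or right of `w_i`. Since `u_i` meets `w_j` for `i ≠ j`, no two indices use the
same axis on the same side. Along an axis separating `z` from `u_0` not both sides are used:
otherwise `z`, which meets `w_a` and `w_b` lying on either side of the base clique, would meet
every `u_i`. Hence `n < 2k`. Conversely, `⌊n/2⌋` axes, each separating `u_i` from `w_i` and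
isolating `w_i` for two indices `i`, together with one axis separating `z` from the base level,
give a representation in dimension `⌊n/2⌋ + 1`.
-/

/-- `HasBoxRep G k` unfolds to `∃ lo hi, IsBoxRep G lo hi`. -/
def IsBoxRep {V : Type*} (G : SimpleGraph V) {k : ℕ} (lo hi : V → Fin k → ℝ) : Prop :=
  ∀ u v : V, u ≠ v → (G.Adj u v ↔ ∀ i, max (lo u i) (lo v i) ≤ min (hi u i) (hi v i))

theorem HasBoxRep.mono {V : Type*} {G : SimpleGraph V} {k l : ℕ} (h : HasBoxRep G k)
    (hkl : k ≤ l) : HasBoxRep G l := by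
  obtain ⟨lo, hi, h⟩ := h
  refine ⟨fun v i => if hik : (i : ℕ) < k then lo v ⟨i, hik⟩ else 0,
    fun v i => if hik : (i : ℕ) < k then hi v ⟨i, hik⟩ else 0, fun u v huv => ?_⟩
  rw [h u v huv]
  refine ⟨fun hov i => ?_, fun hov i => by simpa [i.2] using hov (Fin.castLE hkl i)⟩
  by_cases hik : (i : ℕ) < k
  · simpa [hik] using hov ⟨i, hik⟩
  · simp [hik]

theorem boxicity_eq_succ {V : Type*} {G : SimpleGraph V} {k : ℕ} (h : HasBoxRep G (k + 1))
    (h' : ¬ HasBoxRep G k) : boxicity G = k + 1 :=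
  (Nat.sInf_upward_closed_eq_succ_iff (fun _ _ hkl hk => HasBoxRep.mono hk hkl) k).2 ⟨h, h'⟩

namespace IsBoxRep

variable {V : Type*} {G : SimpleGraph V} {k : ℕ} {lo hi : V → Fin k → ℝ}

theorem lo_le_hi_of_adj (h : IsBoxRep G lo hi) {u v : V} (huv : G.Adj u v) (i : Fin k) :
    lo u i ≤ hi v i :=
  (le_max_left _ _).trans <| ((h u v huv.ne).1 huv i).trans (min_le_right _ _)

theorem lo_le_hi_self_of_adj (h : IsBoxRep G lo hi) {u v : V} (huv : G.Adj u v) (i : Fin k) :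
    lo u i ≤ hi u i :=
  (le_max_left _ _).trans <| ((h u v huv.ne).1 huv i).trans (min_le_left _ _)

theorem exists_of_not_adj (h : IsBoxRep G lo hi) {u v : V} (huv : u ≠ v) (hnadj : ¬ G.Adj u v) :
    ∃ i, min (hi u i) (hi v i) < max (lo u i) (lo v i) := by
  simpa only [h u v huv, not_forall, not_le] using hnadj

theorem pos_of_not_adj (h : IsBoxRep G lo hi) {u v : V} (huv : u ≠ v) (hnadj : ¬ G.Adj u v) :
    0 < k :=
  (h.exists_of_not_adj huv hnadj).choose.pos

theorem exists_hi_lt_lo_of_not_adj (h : IsBoxRep G lo hi) {u v : V} (huv : u ≠ v)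
    (hnadj : ¬ G.Adj u v) (hu : ∀ i, lo u i ≤ hi u i) (hv : ∀ i, lo v i ≤ hi v i) :
    ∃ i, hi u i < lo v i ∨ hi v i < lo u i := by
  obtain ⟨i, hi⟩ := h.exists_of_not_adj huv hnadj
  refine ⟨i, ?_⟩
  simp only [min_lt_iff, lt_max_iff] at hi
  have := hu i
  have := hv i
  grind

end IsBoxRep

theorem Set.subsingleton_setOf_lt_of_le {ι α : Type*} [Preorder α] {a b : ι → α}
    (hab : ∀ i j, i ≠ j → b i ≤ a j) : {i | a i < b i}.Subsingleton := by
  intro i hi j hj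
  by_contra hij
  exact lt_irrefl _ <| (hi.trans_le (hab i j hij)).trans (hj.trans_le (hab j i (Ne.symm hij)))

namespace genMycielski

variable {V : Type*} {G : SimpleGraph V} {u v : V}

theorem adj_zero_zero : (genMycielski G 2).Adj (some (u, 0)) (some (v, 0)) ↔ G.Adj u v := by
  simp only [genMycielski, SimpleGraph.fromRel_adj]
  simpa [G.adj_comm v u] using G.ne_of_adj

theorem adj_zero_one : (genMycielski G 2).Adj (some (u, 0)) (some (v, 1)) ↔ G.Adj u v := by
  simp [genMycielski, G.adj_comm v u]

theorem adj_one_zero : (genMycielski G 2).Adj (some (u, 1)) (some (v, 0)) ↔ G.Adj u v := by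
  rw [SimpleGraph.adj_comm, adj_zero_one, G.adj_comm]

theorem not_adj_one_one : ¬ (genMycielski G 2).Adj (some (u, 1)) (some (v, 1)) := by
  simp [genMycielski]

theorem adj_none_one : (genMycielski G 2).Adj none (some (v, 1)) := by
  simp [genMycielski]

theorem adj_one_none : (genMycielski G 2).Adj (some (v, 1)) none :=
  adj_none_one.symm

theorem not_adj_none_zero : ¬ (genMycielski G 2).Adj none (some (v, 0)) := by
  simp [genMycielski]

theorem not_adj_zero_none : ¬ (genMycielski G 2).Adj (some (v, 0)) none :=
  fun h => not_adj_none_zero h.symm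

theorem eq_none_or_exists (x : Option (V × Fin 2)) :
    x = none ∨ (∃ i, x = some (i, 0)) ∨ ∃ i, x = some (i, 1) := by
  rcases x with _ | ⟨i, l⟩
  · exact .inl rfl
  · fin_cases l
    exacts [.inr (.inl ⟨i, rfl⟩), .inr (.inr ⟨i, rfl⟩)]

end genMycielski

namespace genMycielski

section LowerBound

variable {n k : ℕ} {lo hi : Option (Fin n × Fin 2) → Fin k → ℝ}

theorem lo_le_hi_of_isBoxRep_completeGraph (hn : 2 ≤ n)
    (h : IsBoxRep (genMycielski (completeGraph (Fin n)) 2) lo hi) (x : Option (Fin n × Fin 2))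
    (d : Fin k) : lo x d ≤ hi x d := by
  have : Nontrivial (Fin n) := Fin.nontrivial_iff_two_le.2 hn
  rcases eq_none_or_exists x with rfl | ⟨i, rfl⟩ | ⟨i, rfl⟩
  · exact h.lo_le_hi_self_of_adj (adj_none_one (v := ⟨0, by omega⟩)) d
  · obtain ⟨j, hj⟩ := exists_ne i
    exact h.lo_le_hi_self_of_adj (adj_zero_zero.2 hj.symm) d
  · exact h.lo_le_hi_self_of_adj adj_one_none d

theorem apex_overlaps_base (hn : 2 ≤ n)
    (h : IsBoxRep (genMycielski (completeGraph (Fin n)) 2) lo hi) {d : Fin k} {a b : Fin n}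
    (ha : hi (some (a, 0)) d < lo (some (a, 1)) d) (hb : hi (some (b, 1)) d < lo (some (b, 0)) d)
    (i : Fin n) : lo none d ≤ hi (some (i, 0)) d ∧ lo (some (i, 0)) d ≤ hi none d := by
  have hbase : ∀ i j, lo (some (i, 0)) d ≤ hi (some (j, 0)) d := fun i j => by
    rcases eq_or_ne i j with rfl | hij
    · exact lo_le_hi_of_isBoxRep_completeGraph hn h _ d
    · exact h.lo_le_hi_of_adj (adj_zero_zero.2 hij) d
  have := h.lo_le_hi_of_adj (adj_none_one (v := b)) d
  have := h.lo_le_hi_of_adj (adj_one_none (v := a)) d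
  have := hbase b i
  have := hbase i a
  constructor <;> linarith

theorem lt_two_mul_of_isBoxRep_completeGraph (hn : 1 ≤ n)
    (h : IsBoxRep (genMycielski (completeGraph (Fin n)) 2) lo hi) : n < 2 * k := by
  obtain rfl | hn := hn.eq_or_lt
  · have := h.pos_of_not_adj (u := none) (v := some (0, 0)) (by simp) not_adj_none_zero
    omega
  have hne := lo_le_hi_of_isBoxRep_completeGraph hn h
  let side : Fin n → Fin k ⊕ Fin k → Prop := fun i =>
    Sum.elim (fun d => hi (some (i, 0)) d < lo (some (i, 1)) d)
      (fun d => hi (some (i, 1)) d < lo (some (i, 0)) d)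
  have hside : ∀ i, ∃ s, side i s := fun i => by
    obtain ⟨d, hd | hd⟩ := h.exists_hi_lt_lo_of_not_adj (by simp) (by simp [adj_zero_one])
      (hne (some (i, 0))) (hne (some (i, 1)))
    exacts [⟨.inl d, hd⟩, ⟨.inr d, hd⟩]
  choose g hg using hside
  have hsub : ∀ s, {i | side i s}.Subsingleton := by
    rintro (d | d)
    · exact Set.subsingleton_setOf_lt_of_le fun i j hij =>
        h.lo_le_hi_of_adj (adj_one_zero.2 hij) d
    · exact Set.subsingleton_setOf_lt_of_le fun i j hij =>
        h.lo_le_hi_of_adj (adj_zero_one.2 hij) d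
  have hg_inj : Function.Injective g := fun i j hij => hsub (g i) (hg i) (hij ▸ hg j)
  obtain ⟨d, hd⟩ := h.exists_hi_lt_lo_of_not_adj (u := none) (v := some (⟨0, by omega⟩, 0))
    (by simp) not_adj_none_zero (hne none) (hne _)
  obtain ⟨s, hs⟩ : ∃ s, s ∉ Set.range g := by
    by_contra! hall
    obtain ⟨a, ha⟩ := hall (.inl d)
    obtain ⟨b, hb⟩ := hall (.inr d)
    have hsa : side a (.inl d) := ha ▸ hg a
    have hsb : side b (.inr d) := hb ▸ hg b
    have := apex_overlaps_base hn h hsa hsb ⟨0, by omega⟩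
    rcases hd with hd | hd <;> linarith
  simpa [two_mul] using Fintype.card_lt_of_injective_of_notMem g hg_inj hs

end LowerBound

/-- Axis `d < n / 2` serves the indices `2d, 2d+1`: there `u_{2d} = [0,2]`, `u_{2d+1} = [1,3]`,
`w_{2d} = {3}`, `w_{2d+1} = {0}`, the other `w_i = [1,2]` and all else is `[0,3]`. On the last
axis `n / 2`, `z = {0}`, `u_i = [1,2]`, `w_i = [0,2]`, except `u_{n-1} = {2}` and
`w_{n-1} = [0,1]`. -/
def boxLo (n : ℕ) (x : Option (Fin n × Fin 2)) (d : ℕ) : ℕ :=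
  match x with
  | none => 0
  | some (i, 0) => if d = n / 2 then (if (i : ℕ) = n - 1 then 2 else 1)
      else if (i : ℕ) = 2 * d + 1 then 1 else 0
  | some (i, 1) => if d = n / 2 then 0
      else if (i : ℕ) = 2 * d then 3 else if (i : ℕ) = 2 * d + 1 then 0 else 1

def boxHi (n : ℕ) (x : Option (Fin n × Fin 2)) (d : ℕ) : ℕ :=
  match x with
  | none => if d = n / 2 then 0 else 3
  | some (i, 0) => if d = n / 2 then 2 else if (i : ℕ) = 2 * d then 2 else 3
  | some (i, 1) => if d = n / 2 then (if (i : ℕ) = n - 1 then 1 else 2)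
      else if (i : ℕ) = 2 * d then 3 else if (i : ℕ) = 2 * d + 1 then 0 else 2

theorem boxLo_le_boxHi (n : ℕ) (x : Option (Fin n × Fin 2)) (d : ℕ) :
    boxLo n x d ≤ boxHi n x d := by
  rcases eq_none_or_exists x with rfl | ⟨i, rfl⟩ | ⟨i, rfl⟩ <;> simp only [boxLo, boxHi] <;> grind

theorem boxLo_le_boxHi_of_adj {n : ℕ} {x y : Option (Fin n × Fin 2)}
    (h : (genMycielski (completeGraph (Fin n)) 2).Adj x y) (d : ℕ) :
    boxLo n x d ≤ boxHi n y d := by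
  rcases eq_none_or_exists x with rfl | ⟨i, rfl⟩ | ⟨i, rfl⟩ <;>
    rcases eq_none_or_exists y with rfl | ⟨j, rfl⟩ | ⟨j, rfl⟩ <;>
    simp only [SimpleGraph.irrefl, top_adj, adj_zero_zero, adj_zero_one, adj_one_zero,
      not_adj_one_one, adj_none_one, adj_one_none, not_adj_none_zero, not_adj_zero_none, boxLo,
      boxHi] at h ⊢ <;>
    grind

theorem adj_of_boxLo_le_boxHi {n : ℕ} {x y : Option (Fin n × Fin 2)} (hxy : x ≠ y)
    (h : ∀ d ≤ n / 2, boxLo n x d ≤ boxHi n y d ∧ boxLo n y d ≤ boxHi n x d) :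
    (genMycielski (completeGraph (Fin n)) 2).Adj x y := by
  -- a nonadjacent pair involving the index `i` is separated on the axis `i / 2` or the last one
  have hlast := h (n / 2) le_rfl
  have hx := h ((x.elim 0 fun p => p.1 : ℕ) / 2) (by cases x <;> simp; omega)
  have hy := h ((y.elim 0 fun p => p.1 : ℕ) / 2) (by cases y <;> simp; omega)
  rcases eq_none_or_exists x with rfl | ⟨i, rfl⟩ | ⟨i, rfl⟩ <;>
    rcases eq_none_or_exists y with rfl | ⟨j, rfl⟩ | ⟨j, rfl⟩ <;>
    simp only [top_adj, adj_zero_zero, adj_zero_one, adj_one_zero, not_adj_one_one,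
      adj_none_one, adj_one_none, not_adj_none_zero, not_adj_zero_none, Option.elim, boxLo, boxHi]
      at hlast hx hy ⊢ <;>
    grind

theorem isBoxRep_completeGraph (n : ℕ) :
    IsBoxRep (genMycielski (completeGraph (Fin n)) 2)
      (fun x (d : Fin (n / 2 + 1)) => (boxLo n x d : ℝ)) (fun x d => (boxHi n x d : ℝ)) := by
  intro x y hxy
  simp only [max_le_iff, le_min_iff, Nat.cast_le]
  refine ⟨fun h d => ?_, fun h => adj_of_boxLo_le_boxHi hxy fun d hd => ?_⟩
  · exact ⟨⟨boxLo_le_boxHi n x d, boxLo_le_boxHi_of_adj h.symm d⟩,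
      boxLo_le_boxHi_of_adj h d, boxLo_le_boxHi n y d⟩
  · obtain ⟨⟨-, hyx⟩, hxy, -⟩ := h ⟨d, by omega⟩
    exact ⟨hxy, hyx⟩

end genMycielski

/-- `box(M₂(Kₙ)) = ⌈n/2⌉` for odd `n`, and `n/2 + 1` for even `n ≥ 2`. -/
theorem boxicity_mycielski_complete (n : ℕ) (hn : 1 ≤ n) :
    boxicity (genMycielski (completeGraph (Fin n)) 2) =
      if Odd n then (n + 1) / 2 else n / 2 + 1 := by
  have hformula : (if Odd n then (n + 1) / 2 else n / 2 + 1) = n / 2 + 1 := by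
    split_ifs with hodd
    · obtain ⟨m, rfl⟩ := hodd
      omega
    · rfl
  rw [hformula]
  refine boxicity_eq_succ ⟨_, _, genMycielski.isBoxRep_completeGraph n⟩ fun ⟨_, _, h⟩ => ?_
  have := genMycielski.lt_two_mul_of_isBoxRep_completeGraph hn h
  omega
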